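/- For μ₀ ≥ 0, β₀ ∈ (0, π/2), and x > 0, d/dx of ∫_{β₀}^{π/2} ∫₀^{x/cos β} (1/(2π))·exp(−(r² − 2μ₀ r sin β + μ₀²)/2)·r dr dβ equals (1/(2√(2π)))·e^{−x²/2}·(1 − erf((x tan β₀ − μ₀)/√2)). -/

import Mathlib

open MeasureTheory Real

noncomputable def erf (t : ℝ) : ℝ :=
  (2 / Real.sqrt Real.pi) * ∫ s in (0:ℝ)..t, Real.exp (-s ^ 2)

/-!
Differentiate under the `β`-integral. The `t`-derivative of the inner integral is the density at
`r = t / cos β` times `1 / cos β`, and on the line `X = t` the exponent splits as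
`t² + (t tan β - μ)²`. For `t` near `x` this is dominated by a multiple of
`exp (-(x tan β / 4)²) / cos² β`, integrable by the substitution `s = tan β`. At `t = x` the
substitution `w = (x tan β - μ) / √2` turns the `β`-integral into `exp (-x² / 2)` times a Gaussian
tail `∫_c^∞ exp (-w²) = √π / 2 * (1 - erf c)`.
-/

open Set Filter Metric
open scoped Interval

section TanSubstitution

variable {E : Type*} [NormedAddCommGroup E] [NormedSpace ℝ E] {a b β₀ : ℝ}

lemma image_affine_tan_Ioo (ha : 0 < a) (hβ₀ : β₀ ∈ Ioo (-(π / 2)) (π / 2)) :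
    (fun β => a * tan β + b) '' Ioo β₀ (π / 2) = Ioi (a * tan β₀ + b) := by
  ext y
  constructor
  · rintro ⟨β, hβ, rfl⟩
    have := tan_lt_tan_of_lt_of_lt_pi_div_two (by linarith [hβ₀.1]) hβ.2 hβ.1
    exact add_lt_add_left (mul_lt_mul_of_pos_left this ha) b
  · intro hy
    have hlt : tan β₀ < (y - b) / a := by
      rw [lt_div_iff₀ ha]; linarith [mem_Ioi.mp hy]
    refine ⟨arctan ((y - b) / a), ⟨?_, arctan_lt_pi_div_two _⟩, ?_⟩
    · simpa [arctan_tan hβ₀.1 hβ₀.2] using arctan_strictMono hlt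
    · simp only [tan_arctan]; field_simp; ring

lemma hasDerivWithinAt_affine_tan (hβ₀ : β₀ ∈ Ioo (-(π / 2)) (π / 2)) :
    ∀ β ∈ Ioo β₀ (π / 2),
      HasDerivWithinAt (fun β => a * tan β + b) (a / cos β ^ 2) (Ioo β₀ (π / 2)) β := by
  intro β hβ
  have hcos : cos β ≠ 0 := (cos_pos_of_mem_Ioo ⟨by linarith [hβ₀.1, hβ.1], hβ.2⟩).ne'
  have := (((hasDerivAt_tan hcos).const_mul a).add_const b).hasDerivWithinAt
    (s := Ioo β₀ (π / 2))
  rwa [mul_one_div] at this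

lemma injOn_affine_tan (ha : 0 < a) (hβ₀ : β₀ ∈ Ioo (-(π / 2)) (π / 2)) :
    InjOn (fun β => a * tan β + b) (Ioo β₀ (π / 2)) := by
  intro β₁ h₁ β₂ h₂ h
  refine injOn_tan ⟨by linarith [hβ₀.1, h₁.1], h₁.2⟩ ⟨by linarith [hβ₀.1, h₂.1], h₂.2⟩ ?_
  simpa [ha.ne'] using h

lemma integral_comp_affine_tan (g : ℝ → E) (ha : 0 < a)
    (hβ₀ : β₀ ∈ Ioo (-(π / 2)) (π / 2)) :
    ∫ β in β₀..π / 2, (a / cos β ^ 2) • g (a * tan β + b) = ∫ s in Ioi (a * tan β₀ + b), g s := by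
  rw [← image_affine_tan_Ioo ha hβ₀, integral_image_eq_integral_abs_deriv_smul measurableSet_Ioo
    (hasDerivWithinAt_affine_tan hβ₀) (injOn_affine_tan ha hβ₀),
    intervalIntegral.integral_of_le hβ₀.2.le, ← Measure.restrict_congr_set Ioo_ae_eq_Ioc]
  refine setIntegral_congr_fun measurableSet_Ioo fun β _ => ?_
  rw [abs_of_nonneg (by positivity)]

lemma intervalIntegrable_comp_affine_tan {g : ℝ → E} (ha : 0 < a)
    (hβ₀ : β₀ ∈ Ioo (-(π / 2)) (π / 2)) (hg : IntegrableOn g (Ioi (a * tan β₀ + b))) :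
    IntervalIntegrable (fun β => (a / cos β ^ 2) • g (a * tan β + b)) volume β₀ (π / 2) := by
  rw [← image_affine_tan_Ioo ha hβ₀, integrableOn_image_iff_integrableOn_abs_deriv_smul
    measurableSet_Ioo (hasDerivWithinAt_affine_tan hβ₀) (injOn_affine_tan ha hβ₀)] at hg
  rw [intervalIntegrable_iff_integrableOn_Ioo_of_le hβ₀.2.le]
  refine hg.congr_fun (fun β _ => ?_) measurableSet_Ioo
  dsimp only
  rw [abs_of_nonneg (by positivity)]

end TanSubstitution

lemma integral_Ioi_exp_neg_sq (c : ℝ) : ∫ w in Ioi c, exp (-w ^ 2) = √π / 2 * (1 - erf c) := by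
  have hint : Integrable fun w : ℝ => exp (-w ^ 2) := by
    simpa using integrable_exp_neg_mul_sq one_pos
  have hhalf : ∫ w in Ioi (0 : ℝ), exp (-w ^ 2) = √π / 2 := by
    simpa using integral_gaussian_Ioi 1
  have h₀ := intervalIntegral.integral_Iic_add_Ioi (b := 0) hint.integrableOn hint.integrableOn
  have hc := intervalIntegral.integral_Iic_add_Ioi (b := c) hint.integrableOn hint.integrableOn
  have hsub := intervalIntegral.integral_Iic_sub_Iic (a := 0) (b := c)
    hint.integrableOn hint.integrableOn
  rw [erf]
  field_simp
  linarith

lemma neg_quadratic_div_two_le (r μ s : ℝ) (hs : s ^ 2 ≤ 1) :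
    -(r ^ 2 - 2 * μ * r * s + μ ^ 2) / 2 ≤ μ ^ 2 / 2 - r ^ 2 / 4 := by
  nlinarith [sq_nonneg (r / 2 - μ * s), mul_nonneg (sq_nonneg μ) (sub_nonneg.mpr hs)]

/-- The density at `(r cos β, r sin β)` of the standard Gaussian centred at `(0, μ)`,
times the Jacobian `r` of polar coordinates. -/
noncomputable def polarDensity (μ β r : ℝ) : ℝ :=
  (1 / (2 * π)) * exp (-(r ^ 2 - 2 * μ * r * sin β + μ ^ 2) / 2) * r

/-- The mass on the ray of angle `β` up to the vertical line `{X = t}`. -/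
noncomputable def rayMass (μ t β : ℝ) : ℝ :=
  ∫ r in (0 : ℝ)..t / cos β, polarDensity μ β r

noncomputable def rayMassDeriv (μ t β : ℝ) : ℝ :=
  polarDensity μ β (t / cos β) / cos β

lemma continuous_polarDensity (μ : ℝ) : Continuous fun p : ℝ × ℝ => polarDensity μ p.1 p.2 := by
  unfold polarDensity; fun_prop

lemma continuous_polarDensity_right (μ β : ℝ) : Continuous (polarDensity μ β) := by
  unfold polarDensity; fun_prop

lemma abs_polarDensity_le (μ β r : ℝ) :
    |polarDensity μ β r| ≤ exp (μ ^ 2 / 2) / (2 * π) * |r * exp (-(1 / 4) * r ^ 2)| := by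
  have hexp : exp (-(r ^ 2 - 2 * μ * r * sin β + μ ^ 2) / 2)
      ≤ exp (μ ^ 2 / 2) * exp (-(1 / 4) * r ^ 2) := by
    rw [← exp_add]
    exact exp_le_exp.mpr (by linarith [neg_quadratic_div_two_le r μ (sin β) (sin_sq_le_one β)])
  rw [polarDensity, abs_mul, abs_mul, abs_mul, abs_of_pos (exp_pos _), abs_of_pos (exp_pos _),
    abs_of_pos (by positivity : (0 : ℝ) < 1 / (2 * π))]
  calc 1 / (2 * π) * exp (-(r ^ 2 - 2 * μ * r * sin β + μ ^ 2) / 2) * |r|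
      ≤ 1 / (2 * π) * (exp (μ ^ 2 / 2) * exp (-(1 / 4) * r ^ 2)) * |r| := by gcongr
    _ = _ := by ring

lemma abs_intervalIntegral_le_integral {f h : ℝ → ℝ} (hh : Integrable h)
    (hfh : ∀ r, |f r| ≤ h r) (a b : ℝ) : |∫ r in a..b, f r| ≤ ∫ r, h r :=
  calc |∫ r in a..b, f r| ≤ ∫ r in Ι a b, ‖f r‖ :=
      intervalIntegral.norm_integral_le_integral_norm_uIoc (f := f)
    _ ≤ ∫ r in Ι a b, h r :=
      integral_mono_of_nonneg (ae_of_all _ fun _ => norm_nonneg _) hh.integrableOn (ae_of_all _ hfh)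
    _ ≤ ∫ r, h r := setIntegral_le_integral hh (ae_of_all _ fun r => (abs_nonneg _).trans (hfh r))

lemma abs_rayMass_le (μ t β : ℝ) :
    |rayMass μ t β| ≤ ∫ r, exp (μ ^ 2 / 2) / (2 * π) * |r * exp (-(1 / 4) * r ^ 2)| :=
  abs_intervalIntegral_le_integral
    ((integrable_mul_exp_neg_mul_sq (by norm_num)).abs.const_mul _) (abs_polarDensity_le μ β) _ _

lemma measurable_rayMass (μ t : ℝ) : Measurable (rayMass μ t) := by
  have hcont : Continuous fun p : ℝ × ℝ => ∫ r in (0 : ℝ)..p.2, polarDensity μ p.1 r :=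
    intervalIntegral.continuous_parametric_primitive_of_continuous (continuous_polarDensity μ)
  unfold rayMass
  exact hcont.measurable.comp (by fun_prop : Measurable fun β : ℝ => (β, t / cos β))

lemma measurable_rayMassDeriv (μ t : ℝ) : Measurable (rayMassDeriv μ t) := by
  unfold rayMassDeriv polarDensity; fun_prop

/-- Where `cos β = 0`, the convention `t / 0 = 0` makes both sides vanish. -/
lemma hasDerivAt_rayMass (μ t β : ℝ) :
    HasDerivAt (fun t => rayMass μ t β) (rayMassDeriv μ t β) t := by
  have hcont := continuous_polarDensity_right μ β
  have hupper := intervalIntegral.integral_hasDerivAt_right (hcont.intervalIntegrable 0 (t / cos β))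
    (hcont.stronglyMeasurableAtFilter _ _) hcont.continuousAt
  have hdiv : HasDerivAt (fun t => t / cos β) (1 / cos β) t := by
    simpa using (hasDerivAt_id t).div_const (cos β)
  rw [rayMassDeriv, div_eq_mul_one_div]
  exact hupper.comp t hdiv

lemma rayMassDeriv_eq (μ t β : ℝ) :
    rayMassDeriv μ t β
      = exp (-t ^ 2 / 2) / (2 * π) * (t / cos β ^ 2 * exp (-(t * tan β - μ) ^ 2 / 2)) := by
  rcases eq_or_ne (cos β) 0 with hcos | hcos
  · simp [rayMassDeriv, hcos]
  have hexp : -((t / cos β) ^ 2 - 2 * μ * (t / cos β) * sin β + μ ^ 2) / 2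
      = -t ^ 2 / 2 + -(t * tan β - μ) ^ 2 / 2 := by
    have hsc : sin β ^ 2 + cos β ^ 2 = 1 := sin_sq_add_cos_sq β
    rw [tan_eq_sin_div_cos]
    field_simp
    linear_combination t ^ 2 * hsc
  rw [rayMassDeriv, polarDensity, hexp, exp_add]
  field_simp

noncomputable def rayMassDerivBound (μ x β : ℝ) : ℝ :=
  x / 4 / cos β ^ 2 * (3 * exp (μ ^ 2 / 2) / π * exp (-(x / 4 * tan β) ^ 2))

lemma intervalIntegrable_rayMass (μ t a b : ℝ) : IntervalIntegrable (rayMass μ t) volume a b :=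
  intervalIntegrable_iff.2 <| IntegrableOn.of_bound measure_Ioc_lt_top
    (measurable_rayMass μ t).aestronglyMeasurable _ (ae_of_all _ (abs_rayMass_le μ t))

lemma abs_rayMassDeriv_le {μ x t : ℝ} (ht : t ∈ ball x (x / 2)) (β : ℝ) :
    |rayMassDeriv μ t β| ≤ rayMassDerivBound μ x β := by
  rw [mem_ball, dist_comm, dist_eq_norm, norm_eq_abs, abs_lt] at ht
  obtain ⟨ht₁, ht₂⟩ := ht
  have hx : 0 < x := by linarith
  have hexp : exp (-(t * tan β - μ) ^ 2 / 2) ≤ exp (μ ^ 2 / 2) * exp (-(x / 4 * tan β) ^ 2) := by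
    rw [← exp_add]
    refine exp_le_exp.mpr ?_
    have hq := neg_quadratic_div_two_le (t * tan β) μ 1 (by norm_num)
    have htan : (x / 4 * tan β) ^ 2 ≤ (t * tan β) ^ 2 / 4 := by
      nlinarith [sq_nonneg (tan β), mul_nonneg (sq_nonneg (tan β)) (by linarith : 0 ≤ t - x / 2)]
    nlinarith
  have hdecay : exp (-t ^ 2 / 2) ≤ 1 := exp_le_one_iff.mpr (by nlinarith)
  have ht : 0 ≤ t / cos β ^ 2 := div_nonneg (by linarith) (sq_nonneg _)
  rw [rayMassDeriv_eq, rayMassDerivBound, abs_of_nonneg (by positivity)]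
  calc exp (-t ^ 2 / 2) / (2 * π) * (t / cos β ^ 2 * exp (-(t * tan β - μ) ^ 2 / 2))
      ≤ 1 / (2 * π) * (6 * (x / 4) / cos β ^ 2
          * (exp (μ ^ 2 / 2) * exp (-(x / 4 * tan β) ^ 2))) := by
        gcongr; linarith
    _ = _ := by field_simp; ring

lemma intervalIntegrable_rayMassDerivBound (μ : ℝ) {x β₀ : ℝ} (hx : 0 < x)
    (hβ₀ : β₀ ∈ Ioo (-(π / 2)) (π / 2)) :
    IntervalIntegrable (rayMassDerivBound μ x) volume β₀ (π / 2) := by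
  have hg : Integrable fun s : ℝ => 3 * exp (μ ^ 2 / 2) / π * exp (-s ^ 2) := by
    simpa using (integrable_exp_neg_mul_sq one_pos).const_mul (3 * exp (μ ^ 2 / 2) / π)
  unfold rayMassDerivBound
  simpa using intervalIntegrable_comp_affine_tan (b := 0) (by positivity) hβ₀ hg.integrableOn

lemma hasDerivAt_integral_rayMass (μ : ℝ) {x β₀ : ℝ} (hx : 0 < x)
    (hβ₀ : β₀ ∈ Ioo (-(π / 2)) (π / 2)) :
    HasDerivAt (fun t => ∫ β in β₀..π / 2, rayMass μ t β)
      (∫ β in β₀..π / 2, rayMassDeriv μ x β) x :=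
  (intervalIntegral.hasDerivAt_integral_of_dominated_loc_of_deriv_le
    (ball_mem_nhds x (half_pos hx))
    (Eventually.of_forall fun t => (measurable_rayMass μ t).aestronglyMeasurable)
    (intervalIntegrable_rayMass μ x β₀ (π / 2))
    (measurable_rayMassDeriv μ x).aestronglyMeasurable
    (ae_of_all _ fun β _ _ ht => abs_rayMassDeriv_le ht β)
    (intervalIntegrable_rayMassDerivBound μ hx hβ₀)
    (ae_of_all _ fun β _ t _ => hasDerivAt_rayMass μ t β)).2

lemma integral_rayMassDeriv (μ : ℝ) {x β₀ : ℝ} (hx : 0 < x)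
    (hβ₀ : β₀ ∈ Ioo (-(π / 2)) (π / 2)) :
    ∫ β in β₀..π / 2, rayMassDeriv μ x β
      = 1 / (2 * √(2 * π)) * exp (-x ^ 2 / 2) * (1 - erf ((x * tan β₀ - μ) / √2)) := by
  have hsq2 : √2 ^ 2 = 2 := sq_sqrt zero_le_two
  have hpoint : ∀ β, rayMassDeriv μ x β = exp (-x ^ 2 / 2) / (2 * π) * √2
      * ((x / √2 / cos β ^ 2) • exp (-(x / √2 * tan β + -μ / √2) ^ 2)) := by
    intro β
    have : -(x / √2 * tan β + -μ / √2) ^ 2 = -(x * tan β - μ) ^ 2 / 2 := by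
      field_simp; rw [hsq2]; ring
    rw [rayMassDeriv_eq, smul_eq_mul, this]
    field_simp
  simp_rw [hpoint]
  rw [intervalIntegral.integral_const_mul,
    integral_comp_affine_tan (fun s => exp (-s ^ 2)) (by positivity) hβ₀,
    integral_Ioi_exp_neg_sq, sqrt_mul zero_le_two,
    show x / √2 * tan β₀ + -μ / √2 = (x * tan β₀ - μ) / √2 by ring]
  field_simp
  rw [hsq2, sq_sqrt pi_pos.le]

theorem stmt_11_general (μ₀ β₀ x : ℝ) (hβ : β₀ ∈ Set.Ioo 0 (Real.pi / 2))
    (hx : 0 < x) :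
    HasDerivAt (fun t : ℝ =>
        ∫ β in β₀..(Real.pi / 2),
          ∫ r in (0:ℝ)..(t / Real.cos β),
            (1 / (2 * Real.pi)) * Real.exp (-(r ^ 2 - 2 * μ₀ * r * Real.sin β + μ₀ ^ 2) / 2) * r)
      ((1 / (2 * Real.sqrt (2 * Real.pi))) * Real.exp (-x ^ 2 / 2)
        * (1 - erf ((x * Real.tan β₀ - μ₀) / Real.sqrt 2))) x := by
  have hβ₀ : β₀ ∈ Ioo (-(π / 2)) (π / 2) := ⟨by linarith [hβ.1, pi_pos], hβ.2⟩
  rw [← integral_rayMassDeriv μ₀ hx hβ₀]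
  exact hasDerivAt_integral_rayMass μ₀ hx hβ₀

theorem stmt_11 (μ₀ β₀ x : ℝ) (hμ : 0 ≤ μ₀) (hβ : β₀ ∈ Set.Ioo 0 (Real.pi / 2))
    (hx : 0 < x) :
    HasDerivAt (fun t : ℝ =>
        ∫ β in β₀..(Real.pi / 2),
          ∫ r in (0:ℝ)..(t / Real.cos β),
            (1 / (2 * Real.pi)) * Real.exp (-(r ^ 2 - 2 * μ₀ * r * Real.sin β + μ₀ ^ 2) / 2) * r)
      ((1 / (2 * Real.sqrt (2 * Real.pi))) * Real.exp (-x ^ 2 / 2)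
        * (1 - erf ((x * Real.tan β₀ - μ₀) / Real.sqrt 2))) x :=
  stmt_11_general μ₀ β₀ x hβ hx
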